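/- Let S(t) be a C₀-semigroup on X with growth bound ω₀ < 0 and generator A, and let 0 < α' < α ≤ 1. For x ∈ F_α, the orbit t ↦ S(t)x is Hölder-continuous of exponent α − α' as a map [0,∞) → F_{α'}: there is C > 0 with ‖S(t₂)x − S(t₁)x‖_{F_{α'}} ≤ C |t₂ − t₁|^{α − α'} ‖x‖_{F_α} for all t₂ ≥ t₁ ≥ 0. -/
import Mathlib


open MeasureTheory Set

/-- For a `C₀`-semigroup `S` with growth bound `ω₀ < 0`, `0 < α' < α ≤ 1` and `x` in the
Favard space `F_α` (with `‖S t x − x‖ ≤ M₀ t^α` for `t > 0`), the orbit is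
`(α−α')`-Hölder as a map into `F_{α'}`: for all `t₂ ≥ t₁ ≥ 0` and all `s > 0`,
`s^{−α'} ‖S s (S t₂ x − S t₁ x) − (S t₂ x − S t₁ x)‖ ≤ C (t₂−t₁)^{α−α'} M₀`. -/
theorem favard_orbit_holder_into_favard
    {X : Type*} [NormedAddCommGroup X] [NormedSpace ℝ X] [CompleteSpace X]
    (S : ℝ → X →L[ℝ] X)
    (hS0 : S 0 = 1)
    (hSadd : ∀ s t : ℝ, 0 ≤ s → 0 ≤ t → S (s + t) = S s * S t)
    (hScont : ∀ x : X, ContinuousOn (fun t => S t x) (Set.Ici 0))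
    (M ω₀ : ℝ) (hM : 0 < M) (hω₀ : ω₀ < 0)
    (hgb : ∀ t : ℝ, 0 ≤ t → ‖S t‖ ≤ M * Real.exp (ω₀ * t))
    (α α' : ℝ) (hα : α ∈ Set.Ioc (0 : ℝ) 1) (hα' : 0 < α') (hαα' : α' < α) :
    ∃ C > (0 : ℝ), ∀ (x : X) (M₀ : ℝ), 0 ≤ M₀ →
      (∀ t : ℝ, 0 < t → ‖S t x - x‖ ≤ M₀ * t ^ α) →
      ∀ t₁ t₂ : ℝ, 0 ≤ t₁ → t₁ ≤ t₂ → ∀ s : ℝ, 0 < s →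
        s ^ (-α') * ‖S s (S t₂ x - S t₁ x) - (S t₂ x - S t₁ x)‖
          ≤ C * (t₂ - t₁) ^ (α - α') * M₀ := by
  obtain ⟨hα0, hα1⟩ := hα
  refine ⟨M * (M + 1), by positivity, ?_⟩
  intro x M₀ hM₀ hx t₁ t₂ ht₁ ht₁₂ s hs
  -- uniform bound on the semigroup
  have hMnorm : ∀ t : ℝ, 0 ≤ t → ‖S t‖ ≤ M := by
    intro t ht
    calc ‖S t‖ ≤ M * Real.exp (ω₀ * t) := hgb t ht
      _ ≤ M * 1 := by
          have : Real.exp (ω₀ * t) ≤ 1 :=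
            Real.exp_le_one_iff.mpr (mul_nonpos_of_nonpos_of_nonneg hω₀.le ht)
          nlinarith
      _ = M := mul_one M
  -- commutation
  have hcomm : ∀ a b : ℝ, 0 ≤ a → 0 ≤ b → ∀ w : X, S a (S b w) = S b (S a w) := by
    intro a b ha hb w
    have h : S a * S b = S b * S a := by
      rw [← hSadd a b ha hb, ← hSadd b a hb ha, add_comm]
    exact congrArg (fun T : X →L[ℝ] X => T w) h
  set τ := t₂ - t₁ with hτdef
  have hτ : 0 ≤ τ := by simp [hτdef]; linarith
  set z := S τ x - x with hzdef
  have hst2 : S t₂ x - S t₁ x = S t₁ z := by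
    have h2 : S t₂ = S t₁ * S τ := by
      rw [← hSadd t₁ τ ht₁ hτ]
      congr 1
      simp [hτdef]
    rw [hzdef, map_sub, h2]
    rfl
  have hkey : S s (S t₂ x - S t₁ x) - (S t₂ x - S t₁ x) = S t₁ (S s z - z) := by
    rw [hst2, hcomm s t₁ hs.le ht₁ z, ← map_sub]
  rcases eq_or_lt_of_le hτ with hτ0 | hτpos
  · -- τ = 0 : both sides vanish
    have hz0 : z = 0 := by simp [hzdef, ← hτ0, hS0]
    rw [hkey, hz0]
    simp only [map_zero, sub_zero, norm_zero, mul_zero]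
    have : (0:ℝ) ^ (α - α') = 0 := Real.zero_rpow (by linarith)
    rw [← hτ0] at *
    rw [this]
    nlinarith
  · -- τ > 0
    have hzτ : ‖z‖ ≤ M₀ * τ ^ α := hx τ hτpos
    have hws : ‖S s x - x‖ ≤ M₀ * s ^ α := hx s hs
    have hN1 : ‖S s (S t₂ x - S t₁ x) - (S t₂ x - S t₁ x)‖ ≤ M * ‖S s z - z‖ := by
      rw [hkey]
      calc ‖S t₁ (S s z - z)‖ ≤ ‖S t₁‖ * ‖S s z - z‖ := (S t₁).le_opNorm _
        _ ≤ M * ‖S s z - z‖ := by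
            have := hMnorm t₁ ht₁
            nlinarith [norm_nonneg (S s z - z)]
    have hA : ‖S s z - z‖ ≤ (M + 1) * (M₀ * τ ^ α) := by
      calc ‖S s z - z‖ ≤ ‖S s z‖ + ‖z‖ := norm_sub_le _ _
        _ ≤ ‖S s‖ * ‖z‖ + ‖z‖ := by have := (S s).le_opNorm z; linarith
        _ ≤ M * ‖z‖ + ‖z‖ := by
            have := hMnorm s hs.le
            nlinarith [norm_nonneg z]
        _ = (M + 1) * ‖z‖ := by ring
        _ ≤ (M + 1) * (M₀ * τ ^ α) := by nlinarith
    have hBeq : S s z - z = S τ (S s x - x) - (S s x - x) := by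
      rw [hzdef, map_sub, map_sub, hcomm s τ hs.le hτ x]
      abel
    have hB : ‖S s z - z‖ ≤ (M + 1) * (M₀ * s ^ α) := by
      rw [hBeq]
      calc ‖S τ (S s x - x) - (S s x - x)‖ ≤ ‖S τ (S s x - x)‖ + ‖S s x - x‖ :=
            norm_sub_le _ _
        _ ≤ ‖S τ‖ * ‖S s x - x‖ + ‖S s x - x‖ := by
            have := (S τ).le_opNorm (S s x - x); linarith
        _ ≤ M * ‖S s x - x‖ + ‖S s x - x‖ := by
            have := hMnorm τ hτ
            nlinarith [norm_nonneg (S s x - x)]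
        _ = (M + 1) * ‖S s x - x‖ := by ring
        _ ≤ (M + 1) * (M₀ * s ^ α) := by nlinarith
    have hspow : 0 < s ^ (-α') := Real.rpow_pos_of_pos hs _
    rcases le_total s τ with hsτ | hτs
    · -- use bound B
      have h1 : s ^ (-α') * ‖S s (S t₂ x - S t₁ x) - (S t₂ x - S t₁ x)‖
          ≤ s ^ (-α') * (M * ((M + 1) * (M₀ * s ^ α))) := by
        exact mul_le_mul_of_nonneg_left
          (le_trans hN1 (mul_le_mul_of_nonneg_left hB hM.le)) hspow.le
      have h2 : s ^ (-α') * s ^ α = s ^ (α - α') := by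
        rw [← Real.rpow_add hs]; ring_nf
      have h3 : s ^ (α - α') ≤ τ ^ (α - α') :=
        Real.rpow_le_rpow hs.le hsτ (by linarith)
      calc s ^ (-α') * ‖S s (S t₂ x - S t₁ x) - (S t₂ x - S t₁ x)‖
          ≤ s ^ (-α') * (M * ((M + 1) * (M₀ * s ^ α))) := h1
        _ = M * (M + 1) * M₀ * (s ^ (-α') * s ^ α) := by ring
        _ = M * (M + 1) * M₀ * s ^ (α - α') := by rw [h2]
        _ ≤ M * (M + 1) * M₀ * τ ^ (α - α') :=
            mul_le_mul_of_nonneg_left h3 (by positivity)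
        _ = M * (M + 1) * τ ^ (α - α') * M₀ := by ring
    · -- use bound A
      have h1 : s ^ (-α') * ‖S s (S t₂ x - S t₁ x) - (S t₂ x - S t₁ x)‖
          ≤ s ^ (-α') * (M * ((M + 1) * (M₀ * τ ^ α))) := by
        exact mul_le_mul_of_nonneg_left
          (le_trans hN1 (mul_le_mul_of_nonneg_left hA hM.le)) hspow.le
      have h2 : s ^ (-α') ≤ τ ^ (-α') := by
        rw [Real.rpow_neg hs.le, Real.rpow_neg hτ]
        exact inv_anti₀ (Real.rpow_pos_of_pos hτpos _)
          (Real.rpow_le_rpow hτ hτs hα'.le)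
      have h3 : τ ^ (-α') * τ ^ α = τ ^ (α - α') := by
        rw [← Real.rpow_add hτpos]; ring_nf
      calc s ^ (-α') * ‖S s (S t₂ x - S t₁ x) - (S t₂ x - S t₁ x)‖
          ≤ s ^ (-α') * (M * ((M + 1) * (M₀ * τ ^ α))) := h1
        _ ≤ τ ^ (-α') * (M * ((M + 1) * (M₀ * τ ^ α))) := by
            have hτα : (0:ℝ) ≤ τ ^ α := Real.rpow_nonneg hτ _
            exact mul_le_mul_of_nonneg_right h2 (by positivity)
        _ = M * (M + 1) * M₀ * (τ ^ (-α') * τ ^ α) := by ring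
        _ = M * (M + 1) * M₀ * τ ^ (α - α') := by rw [h3]
        _ = M * (M + 1) * τ ^ (α - α') * M₀ := by ring
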